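/- Let G(X,Y) := (4π)^{-1} e^{−(X²+Y²)/4}, and define the first-order operators D₁ := ∂_X − √3 ∂_Y and D₂ := √3 ∂_X − ∂_Y. Then for all natural numbers a, b, the function D₁^a D₂^b G is an eigenfunction of L_∞ with eigenvalue −(3a+b)/2; that is, L_∞( D₁^a D₂^b G ) = −((3a+b)/2) · D₁^a D₂^b G pointwise on ℝ². -/

import Mathlib

/-- The partial derivative `∂_X f`. -/
noncomputable def pderivX (f : ℝ × ℝ → ℝ) : ℝ × ℝ → ℝ :=
  fun p => deriv (fun x => f (x, p.2)) p.1

/-- The partial derivative `∂_Y f`. -/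
noncomputable def pderivY (f : ℝ × ℝ → ℝ) : ℝ × ℝ → ℝ :=
  fun p => deriv (fun y => f (p.1, y)) p.2

/-- The Fokker–Planck-type operator
`L_∞ f = 4 ∂_Y² f + 2 Y ∂_Y f + 2 f + (√3/2)(X ∂_Y f - Y ∂_X f)`. -/
noncomputable def Linfty (f : ℝ × ℝ → ℝ) : ℝ × ℝ → ℝ :=
  fun p =>
    4 * pderivY (pderivY f) p + 2 * p.2 * pderivY f p + 2 * f p +
      Real.sqrt 3 / 2 * (p.1 * pderivY f p - p.2 * pderivX f p)

/-- The operator `D₁ = ∂_X - √3 ∂_Y`. -/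
noncomputable def Dop₁ (f : ℝ × ℝ → ℝ) : ℝ × ℝ → ℝ :=
  fun p => pderivX f p - Real.sqrt 3 * pderivY f p

/-- The operator `D₂ = √3 ∂_X - ∂_Y`. -/
noncomputable def Dop₂ (f : ℝ × ℝ → ℝ) : ℝ × ℝ → ℝ :=
  fun p => Real.sqrt 3 * pderivX f p - pderivY f p

/-- The Gaussian `G(X,Y) = (4π)⁻¹ e^{-(X²+Y²)/4}`. -/
noncomputable def gauss2 (P : ℝ × ℝ) : ℝ :=
  (4 * Real.pi)⁻¹ * Real.exp (-(P.1 ^ 2 + P.2 ^ 2) / 4)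

/-!
Write `G`-multiples as `P · G` with `P` a polynomial. Since `∂_X (P G) = (∂_X P - X P / 2) G`
and similarly for `∂_Y`, the operators `a ∂_X + b ∂_Y` and `L_∞` become the polynomial operators
`dir a b` and `L`, with `L 1 = 0`. The commutator `[L, dir a b]` is again a direction operator,
`dir (√3 b / 2) (-√3 a / 2 - 2 b)`; the directions `(1, -√3)` of `D₁` and `(√3, -1)` of `D₂` are
eigenvectors of this linear map, with eigenvalues `-3/2` and `-1/2`. So `D₁` and `D₂` are ladder
operators for `L`, shifting eigenvalues by `-3/2` and `-1/2`, starting from the eigenvalue `0`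
of `G` itself.
-/

open MvPolynomial Function

theorem MvPolynomial.pderiv_pderiv_comm {R σ : Type*} [CommSemiring R] [DecidableEq σ]
    (i j : σ) (p : MvPolynomial σ R) : pderiv i (pderiv j p) = pderiv j (pderiv i p) := by
  induction p using MvPolynomial.induction_on with
  | C a => simp
  | add p q hp hq => simp [hp, hq]
  | mul_X p k hp =>
    simp only [pderiv_mul, pderiv_X, map_add, hp, Pi.single_apply]
    split_ifs <;> simp only [Derivation.map_one_eq_zero, map_zero, mul_zero, add_zero]
    ring

theorem MvPolynomial.hasDerivAt_eval_update {𝕜 σ : Type*} [NontriviallyNormedField 𝕜]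
    [DecidableEq σ] (p : MvPolynomial σ 𝕜) (x : σ → 𝕜) (i : σ) :
    HasDerivAt (fun t => eval (update x i t) p) (eval x (pderiv i p)) (x i) := by
  induction p using MvPolynomial.induction_on with
  | C a => simpa using hasDerivAt_const (x i) a
  | add p q hp hq =>
    simp only [map_add]
    exact hp.add hq
  | mul_X p j hp =>
    by_cases hj : j = i
    · subst hj
      simp only [map_mul, eval_X, update_self]
      refine (hp.mul (hasDerivAt_id' (x j))).congr_deriv ?_
      simp only [Derivation.leibniz, pderiv_X_self, map_add, map_mul, map_one, eval_X,
        smul_eq_mul, update_eq_self]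
      ring
    · simp only [map_mul, eval_X, update_of_ne hj]
      refine (hp.mul_const (x j)).congr_deriv ?_
      simp [pderiv_X_of_ne hj, mul_comm]

theorem iterate_ladder_eigen {R M : Type*} [Semiring R] [AddCommMonoid M] [Module R M]
    {L D : M → M} {μ ν : R} (hD : ∀ (c : R) Q, D (c • Q) = c • D Q)
    (hLD : ∀ Q, L (D Q) = D (L Q) + μ • D Q) {Q : M} (hQ : L Q = ν • Q) (n : ℕ) :
    L (D^[n] Q) = (ν + n * μ) • D^[n] Q := by
  induction n with
  | zero => simpa using hQ
  | succ n ih =>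
    rw [iterate_succ_apply', hLD, ih, hD, ← add_smul, Nat.cast_succ, add_mul, one_mul, add_assoc]

theorem hasDerivAt_gauss2_fst (x y : ℝ) :
    HasDerivAt (fun t => gauss2 (t, y)) (-(x / 2) * gauss2 (x, y)) x := by
  refine ((((hasDerivAt_pow 2 x).add_const (y ^ 2)).neg.div_const 4).exp.const_mul
    (4 * Real.pi)⁻¹).congr_deriv ?_
  simp only [gauss2, Pi.neg_apply]; ring

theorem hasDerivAt_gauss2_snd (x y : ℝ) :
    HasDerivAt (fun t => gauss2 (x, t)) (-(y / 2) * gauss2 (x, y)) y := by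
  refine ((((hasDerivAt_pow 2 y).const_add (x ^ 2)).neg.div_const 4).exp.const_mul
    (4 * Real.pi)⁻¹).congr_deriv ?_
  simp only [gauss2, Pi.neg_apply]; ring

namespace GaussConj

abbrev Poly := MvPolynomial (Fin 2) ℝ

noncomputable def dX (P : Poly) : Poly := pderiv 0 P - C (1 / 2) * X 0 * P

noncomputable def dY (P : Poly) : Poly := pderiv 1 P - C (1 / 2) * X 1 * P

noncomputable def dir (a b : ℝ) (P : Poly) : Poly := C a * dX P + C b * dY P

noncomputable def L (P : Poly) : Poly :=
  C 4 * pderiv 1 (pderiv 1 P) - C 2 * X 1 * pderiv 1 P +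
    C (√3 / 2) * (X 0 * pderiv 1 P - X 1 * pderiv 0 P)

theorem dir_smul (a b c : ℝ) (P : Poly) : dir a b (c • P) = c • dir a b P := by
  simp only [dir, dX, dY, smul_eq_C_mul, pderiv_C_mul]
  ring

theorem dir_mul_mul (a b c : ℝ) (P : Poly) : dir (c * a) (c * b) P = c • dir a b P := by
  simp only [dir, smul_eq_C_mul, map_mul]
  ring

theorem L_dir (a b : ℝ) (P : Poly) :
    L (dir a b P) = dir a b (L P) + dir (√3 / 2 * b) (-(√3 / 2 * a) - 2 * b) P := by
  refine MvPolynomial.funext fun x => ?_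
  simp only [L, dir, dX, dY, map_add, map_sub, map_mul, Derivation.leibniz,
    pderiv_C, pderiv_X_self, pderiv_X_of_ne (show (0 : Fin 2) ≠ 1 by decide),
    pderiv_X_of_ne (show (1 : Fin 2) ≠ 0 by decide), pderiv_pderiv_comm (1 : Fin 2) 0,
    Derivation.map_one_eq_zero, smul_eq_mul, map_zero, map_one, mul_zero, eval_C, eval_X]
  ring

theorem L_dir_one_neg_sqrt_three (P : Poly) :
    L (dir 1 (-√3) P) = dir 1 (-√3) (L P) + (-3 / 2 : ℝ) • dir 1 (-√3) P := by
  have h3 : √3 * √3 = 3 := Real.mul_self_sqrt (by norm_num)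
  rw [L_dir, ← dir_mul_mul]
  congr 2
  · linear_combination (-1 / 2) * h3
  · ring

theorem L_dir_sqrt_three_neg_one (P : Poly) :
    L (dir √3 (-1) P) = dir √3 (-1) (L P) + (-1 / 2 : ℝ) • dir √3 (-1) P := by
  have h3 : √3 * √3 = 3 := Real.mul_self_sqrt (by norm_num)
  rw [L_dir, ← dir_mul_mul]
  congr 2
  · ring
  · linear_combination (-1 / 2) * h3

theorem L_one : L 1 = (0 : ℝ) • 1 := by
  simp [L]

noncomputable def gaussMul (P : Poly) : ℝ × ℝ → ℝ := fun p => eval ![p.1, p.2] P * gauss2 p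

theorem gaussMul_smul (c : ℝ) (P : Poly) (p : ℝ × ℝ) : gaussMul (c • P) p = c * gaussMul P p := by
  simp only [gaussMul, smul_eval, mul_assoc]

theorem gaussMul_one : gaussMul 1 = gauss2 := by
  funext p
  simp [gaussMul]

theorem pderivX_gaussMul (P : Poly) : pderivX (gaussMul P) = gaussMul (dX P) := by
  funext p
  have hP := hasDerivAt_eval_update P ![p.1, p.2] 0
  have hupd : ∀ t, update ![p.1, p.2] 0 t = ![t, p.2] := fun t => by
    ext i; fin_cases i <;> rfl
  simp only [hupd, Matrix.cons_val_zero] at hP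
  refine ((hP.mul (hasDerivAt_gauss2_fst p.1 p.2)).deriv).trans ?_
  simp only [gaussMul, dX, map_sub, map_mul, eval_C, eval_X, Matrix.cons_val_zero]
  ring

theorem pderivY_gaussMul (P : Poly) : pderivY (gaussMul P) = gaussMul (dY P) := by
  funext p
  have hP := hasDerivAt_eval_update P ![p.1, p.2] 1
  have hupd : ∀ t, update ![p.1, p.2] 1 t = ![p.1, t] := fun t => by
    ext i; fin_cases i <;> rfl
  simp only [hupd, Matrix.cons_val_one, Matrix.cons_val_zero] at hP
  refine ((hP.mul (hasDerivAt_gauss2_snd p.1 p.2)).deriv).trans ?_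
  simp only [gaussMul, dY, map_sub, map_mul, eval_C, eval_X, Matrix.cons_val_one,
    Matrix.cons_val_zero]
  ring

theorem semiconj_Dop₁ : Semiconj gaussMul (dir 1 (-√3)) Dop₁ := fun P => by
  funext p
  simp only [Dop₁, pderivX_gaussMul, pderivY_gaussMul, gaussMul, dir, map_add, map_mul, eval_C]
  ring

theorem semiconj_Dop₂ : Semiconj gaussMul (dir √3 (-1)) Dop₂ := fun P => by
  funext p
  simp only [Dop₂, pderivX_gaussMul, pderivY_gaussMul, gaussMul, dir, map_add, map_mul, eval_C]
  ring

theorem Linfty_gaussMul (P : Poly) : Linfty (gaussMul P) = gaussMul (L P) := by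
  funext p
  simp only [Linfty, pderivX_gaussMul, pderivY_gaussMul]
  simp only [gaussMul, L, dX, dY, map_add, map_sub, map_mul, Derivation.leibniz, pderiv_C,
    pderiv_X_self, smul_eq_mul, map_zero, map_one, mul_zero, eval_C, eval_X, Matrix.cons_val_zero, Matrix.cons_val_one]
  ring

end GaussConj

/-- For all `a, b : ℕ`, the function `D₁^a D₂^b G` is an eigenfunction of `L_∞` with
eigenvalue `-(3a + b)/2`. -/
theorem stmt_18 (a b : ℕ) :
    ∀ p : ℝ × ℝ,
      Linfty (Dop₁^[a] (Dop₂^[b] gauss2)) p =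
        -((3 * (a : ℝ) + (b : ℝ)) / 2) * Dop₁^[a] (Dop₂^[b] gauss2) p := by
  intro p
  have hD₂ := iterate_ladder_eigen (GaussConj.dir_smul √3 (-1))
    GaussConj.L_dir_sqrt_three_neg_one GaussConj.L_one b
  have hD₁ := iterate_ladder_eigen (GaussConj.dir_smul 1 (-√3))
    GaussConj.L_dir_one_neg_sqrt_three hD₂ a
  rw [← GaussConj.gaussMul_one, ← GaussConj.semiconj_Dop₂.iterate_right b,
    ← GaussConj.semiconj_Dop₁.iterate_right a, GaussConj.Linfty_gaussMul, hD₁,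
    GaussConj.gaussMul_smul]
  ring
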